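/- Kernel of CCC for arbitrary p ≥ 2: taking n = 1 in the CCC construction, the functions F_β^α(x_0) = γ_0 x_0 + θ + αx_0 + βx_0 over ℤ_p yield p codes C_α of size p × p forming a (p, p, p)-CCC, i.e., ∑_{β=0}^{p-1} C_{χ(F_β^{α^1}), χ(F_β^{α^2})}(τ) = 0 for all (α^1,α^2,τ) ≠ (α,α,0) with |τ| < p, and equals p^2 when α^1 = α^2 and τ = 0. -/

import Mathlib

/-! Row `β` of `C_α` is the linear-phase sequence `I ↦ ζ^{(γ₀+α+β)I+θ}`. The aperiodic
correlation of two such rows at shift `τ` factors as `ζ^{(γ₀+α+β)τ}` times a partial geometric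
sum in `ζ^{α₁-α₂}` that does not depend on `β`. Summing over `β` the first factor gives a
multiple of `∑_β ζ^{βτ}`, which vanishes unless `p ∣ τ`, i.e. `τ = 0`; at `τ = 0` the second
factor is the full character sum `∑_{i<p} ζ^{i(α₁-α₂)}`, equal to `p` if `α₁ = α₂` and `0`
otherwise. -/

/-- `ζ_q^e` for an integer exponent `e`. -/
noncomputable def zeta (q : ℕ) (e : ℤ) : ℂ :=
  Complex.exp (2 * Real.pi * Complex.I * (e : ℂ) / (q : ℂ))

/-- Aperiodic cross-correlation of sequences `a, b` of length `N` at integer shift `τ`. -/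
noncomputable def accs (N : ℕ) (a b : ℕ → ℂ) (τ : ℤ) : ℂ :=
  if 0 ≤ τ ∧ τ < (N : ℤ) then
    ∑ i ∈ Finset.range (N - τ.toNat), a (i + τ.toNat) * (starRingEnd ℂ) (b i)
  else if -(N : ℤ) < τ ∧ τ < 0 then
    ∑ i ∈ Finset.range (N - (-τ).toNat), a i * (starRingEnd ℂ) (b (i + (-τ).toNat))
  else 0

open Finset

section zeta

variable (q : ℕ)

theorem zeta_eq_zpow (e : ℤ) : zeta q e = Complex.exp (2 * Real.pi * Complex.I / q) ^ e := by
  rw [zeta, ← Complex.exp_int_mul]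
  ring_nf

theorem zeta_add (a b : ℤ) : zeta q (a + b) = zeta q a * zeta q b := by
  simp only [zeta_eq_zpow, zpow_add₀ (Complex.exp_ne_zero _)]

theorem zeta_natCast_mul (k : ℕ) (m : ℤ) : zeta q (k * m) = zeta q m ^ k := by
  rw [zeta_eq_zpow, zeta_eq_zpow, mul_comm (k : ℤ) m, zpow_mul, zpow_natCast]

theorem conj_zeta (e : ℤ) : starRingEnd ℂ (zeta q e) = zeta q (-e) := by
  rw [zeta, zeta, ← Complex.exp_conj]
  simp [map_div₀, Complex.conj_I, map_ofNat]

variable {q}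

theorem zeta_eq_one_iff (hq : q ≠ 0) (m : ℤ) : zeta q m = 1 ↔ (q : ℤ) ∣ m := by
  rw [zeta_eq_zpow, (Complex.isPrimitiveRoot_exp q hq).zpow_eq_one_iff_dvd]

theorem sum_range_zeta_mul (hq : q ≠ 0) (m : ℤ) :
    ∑ k ∈ range q, zeta q (k * m) = if (q : ℤ) ∣ m then (q : ℂ) else 0 := by
  simp only [zeta_natCast_mul]
  split_ifs with h
  · simp [(zeta_eq_one_iff hq m).2 h]
  · have hq_pow : zeta q m ^ q = 1 := by
      rw [← zeta_natCast_mul, zeta_eq_one_iff hq]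
      exact dvd_mul_right _ _
    rw [geom_sum_eq (mt (zeta_eq_one_iff hq m).1 h), hq_pow, sub_self, zero_div]

theorem sum_range_zeta_add_mul (hq : q ≠ 0) (c m : ℤ) :
    ∑ k ∈ range q, zeta q ((c + k) * m) = if (q : ℤ) ∣ m then (q : ℂ) else 0 := by
  simp only [add_mul, zeta_add, ← mul_sum, sum_range_zeta_mul hq]
  split_ifs with h
  · rw [(zeta_eq_one_iff hq _).2 (dvd_mul_of_dvd_right h c), one_mul]
  · rw [mul_zero]

end zeta

section linearPhase

variable {N q : ℕ} {a b θ τ : ℤ}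

theorem accs_zeta_linear_of_nonneg (h0 : 0 ≤ τ) (hN : τ < N) :
    accs N (fun I => zeta q (a * I + θ)) (fun I => zeta q (b * I + θ)) τ
      = zeta q (a * τ) * ∑ i ∈ range (N - τ.toNat), zeta q (i * (a - b)) := by
  rw [accs, if_pos ⟨h0, hN⟩, mul_sum]
  refine sum_congr rfl fun i _ => ?_
  rw [conj_zeta, ← zeta_add, ← zeta_add]
  congr 1
  push_cast [Int.toNat_of_nonneg h0]
  ring

theorem accs_zeta_linear_of_neg (hN : -N < τ) (h0 : τ < 0) :
    accs N (fun I => zeta q (a * I + θ)) (fun I => zeta q (b * I + θ)) τ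
      = zeta q (b * τ) * ∑ i ∈ range (N - (-τ).toNat), zeta q (i * (a - b)) := by
  rw [accs, if_neg (by omega), if_pos ⟨hN, h0⟩, mul_sum]
  refine sum_congr rfl fun i _ => ?_
  rw [conj_zeta, ← zeta_add, ← zeta_add]
  congr 1
  push_cast [Int.toNat_of_nonneg (neg_nonneg.2 h0.le)]
  ring

end linearPhase

theorem stmt_14_general (p : ℕ) (γ0 θ : ℕ) :
    ∀ α1 < p, ∀ α2 < p, ∀ τ : ℤ, |τ| < (p : ℤ) →
      (¬(α1 = α2 ∧ τ = 0) →
        ∑ β ∈ Finset.range p,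
          accs p
            (fun I => zeta p (((γ0 : ℤ) + (α1 : ℤ) + (β : ℤ)) * (I : ℤ) + (θ : ℤ)))
            (fun I => zeta p (((γ0 : ℤ) + (α2 : ℤ) + (β : ℤ)) * (I : ℤ) + (θ : ℤ))) τ
          = 0) ∧
      (α1 = α2 ∧ τ = 0 →
        ∑ β ∈ Finset.range p,
          accs p
            (fun I => zeta p (((γ0 : ℤ) + (α1 : ℤ) + (β : ℤ)) * (I : ℤ) + (θ : ℤ)))
            (fun I => zeta p (((γ0 : ℤ) + (α2 : ℤ) + (β : ℤ)) * (I : ℤ) + (θ : ℤ))) τ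
          = (p : ℂ) ^ 2) := by
  intro α1 hα1 α2 hα2 τ hτ
  have hp : p ≠ 0 := by omega
  obtain ⟨hτ_lo, hτ_hi⟩ := abs_lt.mp hτ
  have hτ_dvd : (p : ℤ) ∣ τ ↔ τ = 0 :=
    ⟨fun h => Int.eq_zero_of_abs_lt_dvd h hτ, fun h => h ▸ dvd_zero _⟩
  have hα_dvd : (p : ℤ) ∣ ((α1 : ℤ) - α2) ↔ α1 = α2 := by
    refine ⟨fun h => ?_, fun h => by simp [h]⟩
    have := Int.eq_zero_of_abs_lt_dvd h (abs_lt.mpr ⟨by omega, by omega⟩)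
    omega
  rcases le_or_gt 0 τ with hτ0 | hτ0
  · simp only [accs_zeta_linear_of_nonneg hτ0 hτ_hi, add_sub_add_right_eq_sub,
      add_sub_add_left_eq_sub, ← sum_mul, sum_range_zeta_add_mul hp, hτ_dvd]
    obtain rfl | hτ_ne := eq_or_ne τ 0
    · simp only [Int.toNat_zero, Nat.sub_zero, sum_range_zeta_mul hp, hα_dvd]
      by_cases h : α1 = α2 <;> simp [h, sq]
    · simp [hτ_ne]
  · simp only [accs_zeta_linear_of_neg hτ_lo hτ0, add_sub_add_right_eq_sub,
      add_sub_add_left_eq_sub, ← sum_mul, sum_range_zeta_add_mul hp, hτ_dvd, hτ0.ne]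
    simp

/-- Kernel of CCC for arbitrary `p ≥ 2` (n = 1): the functions
`F_β^α(x_0) = γ_0 x_0 + θ + αx_0 + βx_0` over `ℤ_p` yield `p` codes `C_α` of size
`p × p` forming a `(p,p,p)`-CCC: the cross-correlation sum vanishes for all
`(α^1, α^2, τ)` with `|τ| < p` except `α^1 = α^2, τ = 0`, where it equals `p^2`. -/
theorem stmt_14 (p : ℕ) (hp : 2 ≤ p) (γ0 θ : ℕ) (hγ0 : γ0 < p) (hθ : θ < p) :
    ∀ α1 < p, ∀ α2 < p, ∀ τ : ℤ, |τ| < (p : ℤ) →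
      (¬(α1 = α2 ∧ τ = 0) →
        ∑ β ∈ Finset.range p,
          accs p
            (fun I => zeta p (((γ0 : ℤ) + (α1 : ℤ) + (β : ℤ)) * (I : ℤ) + (θ : ℤ)))
            (fun I => zeta p (((γ0 : ℤ) + (α2 : ℤ) + (β : ℤ)) * (I : ℤ) + (θ : ℤ))) τ
          = 0) ∧
      (α1 = α2 ∧ τ = 0 →
        ∑ β ∈ Finset.range p,
          accs p
            (fun I => zeta p (((γ0 : ℤ) + (α1 : ℤ) + (β : ℤ)) * (I : ℤ) + (θ : ℤ)))
            (fun I => zeta p (((γ0 : ℤ) + (α2 : ℤ) + (β : ℤ)) * (I : ℤ) + (θ : ℤ))) τ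
          = (p : ℂ) ^ 2) :=
  stmt_14_general p γ0 θ
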